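/- arXiv:2210.00342 — 2 statements merged into one kernel-verified Lean document; each statement's English description precedes it below -/
import Mathlib

section
/- For all coprime positive integers a and b, the number of distinct subsequences of gen(a,b) that start with the letter A, plus one for the empty subsequence, equals a; and the number of distinct subsequences of gen(a,b) that start with the letter B, plus one for the empty subsequence, equals b. That is, P^A(gen(a,b)) = a and P^B(gen(a,b)) = b. -/
/-- `P s` is the number of distinct subsequences of the binary word `s`
(the letter `A` is `true`, the letter `B` is `false`), including the empty one. -/
def P (s : List Bool) : ℕ := s.sublists.toFinset.card

/-- `PA s` is the number of distinct subsequences of `s` starting with `A` (= `true`),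
plus one for the empty subsequence. -/
def PA (s : List Bool) : ℕ :=
  ((s.sublists.toFinset).filter (fun t => t.head? = some true)).card + 1

/-- `PB s` is the number of distinct subsequences of `s` starting with `B` (= `false`),
plus one for the empty subsequence. -/
def PB (s : List Bool) : ℕ :=
  ((s.sublists.toFinset).filter (fun t => t.head? = some false)).card + 1

/-- `QA s` is the number of distinct subsequences of `s` ending with `A` (= `true`),
plus one for the empty subsequence. -/
def QA (s : List Bool) : ℕ :=
  ((s.sublists.toFinset).filter (fun t => t.getLast? = some true)).card + 1

/-- `QB s` is the number of distinct subsequences of `s` ending with `B` (= `false`),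
plus one for the empty subsequence. -/
def QB (s : List Bool) : ℕ :=
  ((s.sublists.toFinset).filter (fun t => t.getLast? = some false)).card + 1

/-- The word `gen a b`, defined by the Euclidean recursion:
`gen 1 1 = []`, `gen a b = A ∘ gen (a-b) b` if `a > b`, `gen a b = B ∘ gen a (b-a)` if `b > a`. -/
def gen : ℕ → ℕ → List Bool
  | 0, _ => []
  | _ + 1, 0 => []
  | a + 1, b + 1 =>
    if a > b then true :: gen (a - b) (b + 1)
    else if b > a then false :: gen (a + 1) (b - a)
    else []
termination_by a b => a + b
decreasing_by all_goals omega

/-- `star s` swaps all letters `A` and `B` in `s`. -/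
def star (s : List Bool) : List Bool := s.map (fun x => !x)

/-- `z n` is the alternating word `ABAB…` of length `n`. -/
def z : ℕ → List Bool
  | 0 => []
  | n + 1 => true :: star (z n)

lemma filt_same (c : Bool) (s : List Bool) :
    ((c :: s).sublists.toFinset.filter (fun t => t.head? = some c)) =
      s.sublists.toFinset.image (c :: ·) := by
  ext t
  simp only [Finset.mem_filter, Finset.mem_image, List.mem_toFinset, List.mem_sublists]
  constructor
  · rintro ⟨hsub, hhead⟩
    cases t with
    | nil => simp at hhead
    | cons x u =>
      simp only [List.head?_cons, Option.some.injEq] at hhead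
      subst hhead
      exact ⟨u, List.cons_sublist_cons.mp hsub, rfl⟩
  · rintro ⟨u, hu, rfl⟩
    exact ⟨List.cons_sublist_cons.mpr hu, rfl⟩

lemma filt_diff (c d : Bool) (h : c ≠ d) (s : List Bool) :
    ((c :: s).sublists.toFinset.filter (fun t => t.head? = some d)) =
      s.sublists.toFinset.filter (fun t => t.head? = some d) := by
  ext t
  simp only [Finset.mem_filter, List.mem_toFinset, List.mem_sublists]
  constructor
  · rintro ⟨hsub, hhead⟩
    rcases List.sublist_cons_iff.mp hsub with h1 | ⟨r, rfl, hr⟩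
    · exact ⟨h1, hhead⟩
    · simp only [List.head?_cons, Option.some.injEq] at hhead
      exact absurd hhead h
  · rintro ⟨hsub, hhead⟩
    exact ⟨hsub.trans (List.sublist_cons_self c s), hhead⟩

lemma card_split (s : List Bool) :
    s.sublists.toFinset.card =
      (s.sublists.toFinset.filter (fun t => t.head? = some true)).card +
      (s.sublists.toFinset.filter (fun t => t.head? = some false)).card + 1 := by
  classical
  have h1 : s.sublists.toFinset =
      (s.sublists.toFinset.filter (fun t => t.head? = some true)) ∪
      ((s.sublists.toFinset.filter (fun t => t.head? = some false)) ∪ {[]}) := by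
    ext t
    simp only [Finset.mem_union, Finset.mem_filter, Finset.mem_singleton,
      List.mem_toFinset, List.mem_sublists]
    constructor
    · intro ht
      cases t with
      | nil => tauto
      | cons x u => cases x <;> simp_all
    · rintro (⟨h, _⟩ | ⟨h, _⟩ | rfl)
      · exact h
      · exact h
      · exact List.nil_sublist s
  have d1 : Disjoint (s.sublists.toFinset.filter (fun t => t.head? = some true))
      (s.sublists.toFinset.filter (fun t => t.head? = some false)) := by
    rw [Finset.disjoint_left]
    intro t ht ht'
    simp only [Finset.mem_filter] at ht ht'
    rw [ht.2] at ht'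
    simp at ht'
  have d2 : Disjoint (s.sublists.toFinset.filter (fun t => t.head? = some false))
      ({[]} : Finset (List Bool)) := by
    simp [Finset.disjoint_singleton_right]
  have d3 : Disjoint (s.sublists.toFinset.filter (fun t => t.head? = some true))
      ((s.sublists.toFinset.filter (fun t => t.head? = some false)) ∪ {[]}) := by
    rw [Finset.disjoint_union_right]
    exact ⟨d1, by simp [Finset.disjoint_singleton_right]⟩
  conv_lhs => rw [h1]
  rw [Finset.card_union_of_disjoint d3, Finset.card_union_of_disjoint d2,
    Finset.card_singleton]
  omega

lemma PA_cons_true (s : List Bool) : PA (true :: s) = PA s + PB s := by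
  unfold PA PB
  rw [filt_same, Finset.card_image_of_injective _ (fun a b h => by simpa using h)]
  have := card_split s
  omega

lemma PB_cons_true (s : List Bool) : PB (true :: s) = PB s := by
  unfold PB
  rw [filt_diff true false (by simp)]

lemma PB_cons_false (s : List Bool) : PB (false :: s) = PA s + PB s := by
  unfold PA PB
  rw [filt_same, Finset.card_image_of_injective _ (fun a b h => by simpa using h)]
  have := card_split s
  omega

lemma PA_cons_false (s : List Bool) : PA (false :: s) = PA s := by
  unfold PA
  rw [filt_diff false true (by simp)]

lemma gen_gt {a b : ℕ} (hb : 0 < b) (h : b < a) : gen a b = true :: gen (a - b) b := by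
  obtain ⟨a', rfl⟩ : ∃ a', a = a' + 1 := ⟨a - 1, by omega⟩
  obtain ⟨b', rfl⟩ : ∃ b', b = b' + 1 := ⟨b - 1, by omega⟩
  rw [show a' + 1 - (b' + 1) = a' - b' from by omega, gen]
  simp only [if_pos (by omega : a' > b')]

lemma gen_lt {a b : ℕ} (ha : 0 < a) (h : a < b) : gen a b = false :: gen a (b - a) := by
  obtain ⟨a', rfl⟩ : ∃ a', a = a' + 1 := ⟨a - 1, by omega⟩
  obtain ⟨b', rfl⟩ : ∃ b', b = b' + 1 := ⟨b - 1, by omega⟩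
  rw [show b' + 1 - (a' + 1) = b' - a' from by omega, gen]
  rw [if_neg (by omega), if_pos (by omega : b' > a')]

lemma gen_one_one : gen 1 1 = [] := by rw [gen]; simp


lemma main_ind : ∀ n a b, a + b ≤ n → 0 < a → 0 < b → Nat.Coprime a b →
    PA (gen a b) = a ∧ PB (gen a b) = b := by
  intro n
  induction n with
  | zero => intro a b h ha hb _; omega
  | succ n ih =>
    intro a b h ha hb hab
    rcases lt_trichotomy a b with hlt | heq | hgt
    · rw [gen_lt ha hlt, PA_cons_false, PB_cons_false]
      have hco : Nat.Coprime a (b - a) :=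
        (Nat.coprime_sub_self_right (le_of_lt hlt)).mpr hab
      obtain ⟨h1, h2⟩ := ih a (b - a) (by omega) ha (by omega) hco
      omega
    · subst heq
      have : a = 1 := by simpa using hab
      subst this
      rw [gen_one_one]
      constructor <;> decide
    · rw [gen_gt hb hgt, PA_cons_true, PB_cons_true]
      have hco : Nat.Coprime (a - b) b :=
        (Nat.coprime_sub_self_left (le_of_lt hgt)).mpr hab
      obtain ⟨h1, h2⟩ := ih (a - b) b (by omega) (by omega) hb hco
      omega


/-- For all coprime positive integers `a` and `b`, `P^A(gen(a,b)) = a` and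
`P^B(gen(a,b)) = b` (subsequences starting with the given letter, the empty one included). -/
theorem PA_PB_gen (a b : ℕ) (ha : 0 < a) (hb : 0 < b) (hab : Nat.Coprime a b) :
    PA (gen a b) = a ∧ PB (gen a b) = b :=
  main_ind (a + b) a b le_rfl ha hb hab
end

section
/- Let C be a positive integer and let s be a binary word in which no letter occurs more than C times consecutively. Then s contains z_m or (z_m)^* as a subsequence, where m = ⌊|s|/C⌋; consequently P(s) ≥ F_{m+3} − 1, and hence if P(s) ≤ N then |s| ≤ C·(m+1) for the largest m with F_{m+3} − 1 ≤ N, i.e., |s| = O(C log N). -/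


lemma br_star_star (t : List Bool) : star (star t) = t := by
  induction t <;> simp_all [_root_.star]

lemma br_star_inj : Function.Injective star :=
  Function.LeftInverse.injective br_star_star

lemma br_head?_star (t : List Bool) : (star t).head? = t.head?.map (!·) := by
  cases t <;> simp [_root_.star]

lemma mem_S {t s : List Bool} : t ∈ s.sublists.toFinset ↔ t.Sublist s := by
  simp [List.mem_sublists]

def Ph (b : Bool) (s : List Bool) : ℕ :=
  ((s.sublists.toFinset).filter (fun t => t.head? = some b)).card

lemma br_card_mono {t s : List Bool} (h : t.Sublist s) :
    t.sublists.toFinset.card ≤ s.sublists.toFinset.card := by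
  apply Finset.card_le_card
  intro u hu
  rw [mem_S] at *
  exact hu.trans h

lemma S_star (s : List Bool) :
    (star s).sublists.toFinset = (s.sublists.toFinset).image star := by
  ext t
  simp only [mem_S, Finset.mem_image]
  constructor
  · intro h
    refine ⟨star t, ?_, br_star_star t⟩
    have h2 : (star t).Sublist (star (star s)) := h.map _
    rwa [br_star_star] at h2
  · rintro ⟨u, hu, rfl⟩
    exact hu.map _

lemma br_card_star (s : List Bool) :
    (star s).sublists.toFinset.card = s.sublists.toFinset.card := by
  rw [S_star, Finset.card_image_of_injective _ br_star_inj]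

lemma Ph_star (b : Bool) (s : List Bool) : Ph b (star s) = Ph (!b) s := by
  unfold Ph
  have key : ((star s).sublists.toFinset).filter (fun t => t.head? = some b)
      = ((s.sublists.toFinset).filter (fun t => t.head? = some (!b))).image star := by
    ext t
    simp only [Finset.mem_filter, Finset.mem_image, mem_S]
    constructor
    · rintro ⟨ht, hh⟩
      refine ⟨star t, ⟨?_, ?_⟩, br_star_star t⟩
      · have h2 : (star t).Sublist (star (star s)) := ht.map _
        rwa [br_star_star] at h2
      · rw [br_head?_star, hh]
        rfl
    · rintro ⟨u, ⟨hu, hh⟩, rfl⟩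
      refine ⟨hu.map _, ?_⟩
      rw [br_head?_star, hh]
      simp
  rw [key, Finset.card_image_of_injective _ br_star_inj]

lemma S_cons (b : Bool) (s : List Bool) :
    (b :: s).sublists.toFinset
      = s.sublists.toFinset ∪ (s.sublists.toFinset).image (b :: ·) := by
  ext t
  simp only [mem_S, Finset.mem_union, Finset.mem_image, List.sublist_cons_iff]
  constructor
  · rintro (h | ⟨r, rfl, hr⟩)
    · exact Or.inl h
    · exact Or.inr ⟨r, hr, rfl⟩
  · rintro (h | ⟨r, hr, rfl⟩)
    · exact Or.inl h
    · exact Or.inr ⟨r, rfl, hr⟩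

lemma inter_S (b : Bool) (s : List Bool) :
    s.sublists.toFinset ∩ (s.sublists.toFinset).image (b :: ·)
      = (s.sublists.toFinset).filter (fun t => t.head? = some b) := by
  ext t
  simp only [Finset.mem_inter, Finset.mem_image, Finset.mem_filter, mem_S]
  constructor
  · rintro ⟨ht, r, hr, rfl⟩
    exact ⟨ht, rfl⟩
  · rintro ⟨ht, hh⟩
    refine ⟨ht, ?_⟩
    cases t with
    | nil => simp at hh
    | cons c t' =>
      simp only [List.head?_cons, Option.some.injEq] at hh
      subst hh
      exact ⟨t', (List.tail_sublist _).trans ht, rfl⟩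

lemma P_cons_eq (b : Bool) (s : List Bool) :
    (b :: s).sublists.toFinset.card + Ph b s = 2 * s.sublists.toFinset.card := by
  have h := Finset.card_union_add_card_inter s.sublists.toFinset
    ((s.sublists.toFinset).image (b :: ·))
  rw [inter_S, Finset.card_image_of_injective _ (List.cons_injective)] at h
  rw [S_cons]
  unfold Ph
  omega

lemma Ph_cons (b : Bool) (s : List Bool) :
    Ph b (b :: s) = s.sublists.toFinset.card := by
  unfold Ph
  have : ((b :: s).sublists.toFinset).filter (fun t => t.head? = some b)
      = (s.sublists.toFinset).image (b :: ·) := by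
    ext t
    simp only [Finset.mem_filter, Finset.mem_image, mem_S]
    constructor
    · rintro ⟨ht, hh⟩
      cases t with
      | nil => simp at hh
      | cons c t' =>
        simp only [List.head?_cons, Option.some.injEq] at hh
        subst hh
        exact ⟨t', List.cons_sublist_cons.1 ht, rfl⟩
    · rintro ⟨r, hr, rfl⟩
      exact ⟨List.cons_sublist_cons.2 hr, rfl⟩
  rw [this, Finset.card_image_of_injective _ (List.cons_injective)]

lemma Ph_partition (s : List Bool) :
    Ph true s + Ph false s + 1 = s.sublists.toFinset.card := by
  classical
  have hins : s.sublists.toFinset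
      = insert [] (((s.sublists.toFinset).filter (fun t => t.head? = some true))
          ∪ ((s.sublists.toFinset).filter (fun t => t.head? = some false))) := by
    ext t
    simp only [Finset.mem_insert, Finset.mem_union, Finset.mem_filter, mem_S]
    constructor
    · intro ht
      cases t with
      | nil => exact Or.inl rfl
      | cons c t' =>
        cases c
        · exact Or.inr (Or.inr ⟨ht, rfl⟩)
        · exact Or.inr (Or.inl ⟨ht, rfl⟩)
    · rintro (rfl | ⟨ht, _⟩ | ⟨ht, _⟩)
      · exact List.nil_sublist s
      · exact ht
      · exact ht
  have hdisj : Disjoint ((s.sublists.toFinset).filter (fun t => t.head? = some true))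
      ((s.sublists.toFinset).filter (fun t => t.head? = some false)) := by
    rw [Finset.disjoint_left]
    intro t h1 h2
    simp only [Finset.mem_filter] at h1 h2
    rw [h1.2] at h2
    simp at h2
  have hnil : ([] : List Bool) ∉
      ((s.sublists.toFinset).filter (fun t => t.head? = some true))
        ∪ ((s.sublists.toFinset).filter (fun t => t.head? = some false)) := by
    simp
  rw [hins, Finset.card_insert_of_notMem hnil, Finset.card_union_of_disjoint hdisj]
  unfold Ph
  omega

lemma br_P_z (n : ℕ) :
    (z n).sublists.toFinset.card + 1 = Nat.fib (n + 3) ∧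
      Ph true (z n) + 1 = Nat.fib (n + 2) := by
  induction n with
  | zero =>
    constructor <;> decide
  | succ n ih =>
    have hz : z (n + 1) = true :: star (z n) := rfl
    have h1 := P_cons_eq true (star (z n))
    have h2 := Ph_cons true (star (z n))
    have h3 := br_card_star (z n)
    have h4 := Ph_star true (z n)
    have h5 := Ph_partition (z n)
    have hf1 : Nat.fib (n + 4) = Nat.fib (n + 3) + Nat.fib (n + 2) := by
      have h := Nat.fib_add_two (n := n + 2)
      rw [show n + 2 + 2 = n + 4 by omega, show n + 2 + 1 = n + 3 by omega] at h
      omega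
    have h4' : Ph true (star (z n)) = Ph false (z n) := by simpa using h4
    rw [br_card_star, h4'] at h1
    rw [br_card_star] at h2
    have e1 : n + 1 + 3 = n + 4 := by omega
    have e2 : n + 1 + 2 = n + 3 := by omega
    rw [hz]
    constructor
    · rw [e1]
      omega
    · rw [e2, h2]
      omega

def zw (b : Bool) : ℕ → List Bool
  | 0 => []
  | n + 1 => b :: zw (!b) n

lemma zw_eq (n : ℕ) : zw true n = z n ∧ zw false n = star (z n) := by
  induction n with
  | zero => simp [zw, z, _root_.star]
  | succ n ih =>
    constructor
    · show true :: zw false n = true :: star (z n)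
      rw [ih.2]
    · show false :: zw true n = star (true :: star (z n))
      rw [ih.1]
      show _ = false :: star (star (z n))
      rw [br_star_star]

lemma zw_mono : ∀ (m : ℕ) (b : Bool) (n : ℕ), m ≤ n → (zw b m).Sublist (zw b n) := by
  intro m
  induction m with
  | zero => intro b n _; exact List.nil_sublist _
  | succ m ih =>
    intro b n h
    obtain ⟨n', rfl⟩ : ∃ n', n = n' + 1 := ⟨n - 1, by omega⟩
    show (b :: zw (!b) m).Sublist (b :: zw (!b) n')
    exact List.cons_sublist_cons.2 (ih (!b) n' (by omega))

lemma key_struct (C : ℕ) (hC : 0 < C) :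
    ∀ (n : ℕ) (s : List Bool), s.length ≤ n →
      (∀ b : Bool, ¬ (List.replicate (C + 1) b <:+: s)) →
      ∀ b : Bool, (∀ c, s.head? = some c → c = b) →
      (zw b (s.length / C)).Sublist s := by
  intro n
  induction n with
  | zero =>
    intro s hs _ b _
    have : s = [] := List.eq_nil_of_length_eq_zero (by omega)
    subst this
    simp only [List.length_nil, Nat.zero_div]
    exact List.nil_sublist _
  | succ n ih =>
    intro s hs hruns b hb
    cases s with
    | nil =>
      simp only [List.length_nil, Nat.zero_div]
      exact List.nil_sublist _
    | cons a rest =>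
      have hab : a = b := hb a rfl
      subst hab
      set u := rest.takeWhile (· == a) with hu
      set t := rest.dropWhile (· == a) with ht
      have hsplit : rest = u ++ t := (List.takeWhile_append_dropWhile (p := (· == a)) (l := rest)).symm
      have humem : ∀ x ∈ u, x = a := by
        intro x hx
        simpa using List.mem_takeWhile_imp hx
      -- u is short
      have hlen : u.length + 1 ≤ C := by
        by_contra hcon
        apply hruns a
        have h1 : (u ++ t).take C = u.take C := List.take_append_of_le_length (by omega)
        have h2 : u.take C = List.replicate C a := by
          rw [List.eq_replicate_iff]
          refine ⟨?_, fun x hx => humem x (List.mem_of_mem_take hx)⟩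
          rw [List.length_take]
          omega
        have h3 : (a :: rest).take (C + 1) = List.replicate (C + 1) a := by
          rw [List.replicate_succ, List.take_succ_cons, hsplit, h1, h2]
        have h4 : List.replicate (C + 1) a <+: a :: rest := by
          rw [← h3]
          exact List.take_prefix _ _
        exact h4.isInfix
      -- head of t
      have hhead : ∀ c, t.head? = some c → c = !a := by
        intro c hc
        have hd := List.head?_dropWhile_not (· == a) rest
        rw [← ht, hc] at hd
        simp only at hd
        cases c <;> cases a <;> first | rfl | simp at hd
      -- runs condition for t
      have hrunt : ∀ b' : Bool, ¬ (List.replicate (C + 1) b' <:+: t) := by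
        intro b' hinf
        exact hruns b' (hinf.trans (((List.dropWhile_suffix _).trans
          (List.suffix_cons a rest)).isInfix))
      -- lengths
      have hlt : t.length ≤ n := by
        have h5 : rest.length = u.length + t.length := by rw [hsplit]; simp
        simp only [List.length_cons] at hs
        omega
      have iht : (zw (!a) (t.length / C)).Sublist t := ih t hlt hrunt (!a) hhead
      have hbt : (a :: t).Sublist (a :: rest) :=
        List.cons_sublist_cons.2 (List.dropWhile_suffix _).sublist
      have hstep : (zw a (t.length / C + 1)).Sublist (a :: rest) := by
        show (a :: zw (!a) (t.length / C)).Sublist (a :: rest)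
        exact (List.cons_sublist_cons.2 iht).trans hbt
      have hdiv : (a :: rest).length / C ≤ t.length / C + 1 := by
        have h5 : rest.length = u.length + t.length := by rw [hsplit]; simp
        have h6 : (a :: rest).length ≤ t.length + C := by
          simp only [List.length_cons]
          omega
        calc (a :: rest).length / C ≤ (t.length + C) / C := Nat.div_le_div_right h6
          _ = t.length / C + 1 := Nat.add_div_right _ hC
      exact (zw_mono _ a _ hdiv).trans hstep

/-- Let `C ≥ 1` and let `s` be a binary word in which no letter occurs more than `C` times
consecutively. Then `s` contains `z_m` or `(z_m)^*` as a subsequence, where `m = ⌊|s|/C⌋`;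
consequently `P(s) ≥ F_{m+3} - 1`, and if `P(s) ≤ N` then `|s| ≤ C·(M+1)` for the largest
`M` with `F_{M+3} - 1 ≤ N`, i.e. `|s| = O(C log N)`. -/
theorem bounded_runs (C : ℕ) (hC : 0 < C) (s : List Bool)
    (hruns : ∀ b : Bool, ¬ (List.replicate (C + 1) b <:+: s)) :
    (List.Sublist (z (s.length / C)) s ∨ List.Sublist (star (z (s.length / C))) s) ∧
    Nat.fib (s.length / C + 3) - 1 ≤ P s ∧
    ∀ N M : ℕ, P s ≤ N → IsGreatest {j : ℕ | Nat.fib (j + 3) - 1 ≤ N} M →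
      s.length ≤ C * (M + 1) := by
  have hsub : (z (s.length / C)).Sublist s ∨ (star (z (s.length / C))).Sublist s := by
    cases s with
    | nil =>
      left
      simp only [List.length_nil, Nat.zero_div]
      exact List.nil_sublist _
    | cons a rest =>
      have h := key_struct C hC (a :: rest).length (a :: rest) le_rfl hruns a
        (by
          intro c hc
          simp only [List.head?_cons, Option.some.injEq] at hc
          exact hc.symm)
      cases a with
      | false =>
        right
        rw [← (zw_eq _).2]
        exact h
      | true =>
        left
        rw [← (zw_eq _).1]
        exact h
  have hfib := (br_P_z (s.length / C)).1
  have hP : Nat.fib (s.length / C + 3) - 1 ≤ P s := by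
    rcases hsub with h | h
    · have hm := br_card_mono h
      unfold P
      omega
    · have hm := br_card_mono h
      rw [br_card_star] at hm
      unfold P
      omega
  refine ⟨hsub, hP, ?_⟩
  intro N M hPN hM
  have hmem : s.length / C ∈ {j : ℕ | Nat.fib (j + 3) - 1 ≤ N} := le_trans hP hPN
  have hmM : s.length / C ≤ M := hM.2 hmem
  have h1 : s.length / C < M + 1 := by omega
  have h2 : s.length < (M + 1) * C := (Nat.div_lt_iff_lt_mul hC).1 h1
  calc s.length ≤ (M + 1) * C := h2.le
    _ = C * (M + 1) := Nat.mul_comm _ _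
end
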